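/- arXiv:1312.7730 — 6 statements merged into one kernel-verified Lean document; each statement's English description precedes it below -/
import Mathlib

section
/- Let X be a normed space, φ, f: X → (-∞,∞] with φ(0)=0, T(x) = inf{φ(y−x)+f(y) : y ∈ X}, and let x̄ satisfy T(x̄) = f(x̄) with T(x̄) finite. Then for every ε ≥ 0, every x* in the ε-Fréchet subdifferential of T at x̄ satisfies −x* ∈ ∂̂_ε φ(0); i.e., ∂̂_ε T(x̄) ⊂ −∂̂_ε φ(0). -/
noncomputable section
open Filter Topology

variable {X : Type*} [NormedAddCommGroup X] [NormedSpace ℝ X]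

/-- ε-Fréchet subdifferential of g : X → EReal at x₀, as a set of continuous linear functionals. -/
def eFrechetSub (ε : ℝ) (g : X → EReal) (x₀ : X) : Set (X →L[ℝ] ℝ) :=
  {p | (-(ε : EReal)) ≤ liminf (fun x =>
      (g x - g x₀ - ((p (x - x₀) : ℝ) : EReal)) * ((‖x - x₀‖⁻¹ : ℝ) : EReal)) (𝓝[≠] x₀)}

/-- s-Hölder subdifferential of g at x₀. -/
def holderSub (s : ℝ) (g : X → EReal) (x₀ : X) : Set (X →L[ℝ] ℝ) :=
  {p | (⊥ : EReal) < liminf (fun x =>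
      (g x - g x₀ - ((p (x - x₀) : ℝ) : EReal)) * (((‖x - x₀‖ ^ (1 + s))⁻¹ : ℝ) : EReal)) (𝓝[≠] x₀)}

/-- Infimal convolution T(x) = inf_y (φ(y - x) + f(y)). -/
def infConv (φ f : X → EReal) : X → EReal := fun x => ⨅ y, (φ (y - x) + f y)

/-- Minkowski gauge ρ_F(x) = inf {t ≥ 0 : x ∈ tF}, with inf ∅ = +∞. -/
def gauge' (F : Set X) : X → EReal := fun x =>
  sInf {r : EReal | ∃ t : ℝ, 0 ≤ t ∧ (∃ u ∈ F, x = t • u) ∧ r = (t : EReal)}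

open Classical in
def eIndicator (Ω : Set X) : X → EReal := fun x => if x ∈ Ω then (0 : EReal) else ⊤

/-- Convexity for extended-real-valued functions. -/
def ERealConvexOn (g : X → EReal) : Prop :=
  ∀ x y : X, ∀ t : ℝ, 0 ≤ t → t ≤ 1 →
    g (t • x + (1 - t) • y) ≤ ((t : ℝ) : EReal) * g x + (((1 - t : ℝ)) : EReal) * g y

/-
Taking y = x̄ in the infimum defining T gives T(x̄ - u) ≤ φ(u) + f(x̄) = φ(u) + T(x̄), so every
difference quotient of T at x̄ in the direction -u is dominated by that of φ at 0 in the
direction u. The ε-subgradient inequality for x* at x̄ therefore transfers to -x* at 0.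
-/

theorem neg_mem_eFrechetSub_of_sub_le {g h : X → EReal} {x₀ : X} {ε : ℝ} {p : X →L[ℝ] ℝ}
    (hp : p ∈ eFrechetSub ε g x₀) (hgh : ∀ u, g (x₀ - u) - g x₀ ≤ h u - h 0) :
    -p ∈ eFrechetSub ε h 0 := by
  simp only [eFrechetSub, Set.mem_ofPred_eq] at hp ⊢
  have hmap : map (x₀ - ·) (𝓝[≠] 0) = 𝓝[≠] x₀ := by rw [map_subLeft_nhdsNE, sub_zero]
  rw [← hmap, ← liminf_comp] at hp
  refine hp.trans (liminf_le_liminf (Eventually.of_forall fun u => ?_))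
  have hdir : x₀ - u - x₀ = -u := by abel
  simp only [Function.comp_apply, hdir, sub_zero, norm_neg, map_neg, neg_apply]
  gcongr
  exact EReal.sub_le_sub (hgh u) le_rfl

theorem infConv_sub_le {E : Type*} [NormedAddCommGroup E] (φ f : E → EReal) (x u : E) :
    infConv φ f (x - u) ≤ φ u + f x :=
  calc infConv φ f (x - u) ≤ φ (x - (x - u)) + f x := iInf_le _ x
    _ = φ u + f x := by rw [sub_sub_cancel]

theorem stmt2_general (φ f : X → EReal) (hfbot : ∀ x, f x ≠ ⊥)
    (hφ0 : φ 0 = 0) (x₀ : X) (hS : infConv φ f x₀ = f x₀) (hfin : f x₀ ≠ ⊤) :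
    ∀ ε : ℝ, 0 ≤ ε →
      eFrechetSub ε (infConv φ f) x₀ ⊆ {p | -p ∈ eFrechetSub ε φ 0} := by
  intro ε _ p hp
  obtain ⟨r, hr⟩ : ∃ r : ℝ, f x₀ = r := ⟨_, (EReal.coe_toReal hfin (hfbot x₀)).symm⟩
  refine neg_mem_eFrechetSub_of_sub_le (h := φ) hp fun u => ?_
  have hT : infConv φ f (x₀ - u) ≤ φ u + r := hr ▸ infConv_sub_le φ f x₀ u
  calc infConv φ f (x₀ - u) - infConv φ f x₀ = infConv φ f (x₀ - u) - r := by rw [hS, hr]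
    _ ≤ (φ u + r) - r := EReal.sub_le_sub hT le_rfl
    _ = φ u - φ 0 := by rw [EReal.add_sub_cancel_right, hφ0, sub_zero]

theorem stmt2 (φ f : X → EReal) (hφbot : ∀ x, φ x ≠ ⊥) (hfbot : ∀ x, f x ≠ ⊥)
    (hφ0 : φ 0 = 0) (x₀ : X) (hS : infConv φ f x₀ = f x₀) (hfin : f x₀ ≠ ⊤) :
    ∀ ε : ℝ, 0 ≤ ε →
      eFrechetSub ε (infConv φ f) x₀ ⊆ {p | -p ∈ eFrechetSub ε φ 0} :=
  stmt2_general φ f hfbot hφ0 x₀ hS hfin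
end
end

section
/- Let X be a normed space, g: X → (-∞,∞] a convex function, x̄ ∈ dom g, and ε ≥ 0. Then x* belongs to the ε-Fréchet subdifferential of g at x̄ if and only if ⟨x*, x − x̄⟩ ≤ g(x) − g(x̄) + ε‖x − x̄‖ for all x ∈ X. -/
/-! For convex `g`, the difference quotient `(g x - g x₀ - p (x - x₀)) / ‖x - x₀‖` can only
decrease as `x` slides towards `x₀` along the segment `[x₀, x]`. Hence the liminf at `x₀`
is bounded by the quotient at every `x ≠ x₀`, and the ε-Fréchet condition, a lower bound `-ε`
on that liminf, is the same as the lower bound `-ε` on every quotient, which is the global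
inequality. -/
noncomputable section
open Filter Topology

variable {X : Type*} [NormedAddCommGroup X] [NormedSpace ℝ X]

def frechetQuotient (g : X → EReal) (x₀ : X) (p : X →L[ℝ] ℝ) (x : X) : EReal :=
  (g x - g x₀ - ((p (x - x₀) : ℝ) : EReal)) * ((‖x - x₀‖⁻¹ : ℝ) : EReal)

theorem tendsto_add_smul_nhdsNE (x₀ : X) {v : X} (hv : v ≠ 0) :
    Tendsto (fun t : ℝ => x₀ + t • v) (𝓝[≠] 0) (𝓝[≠] x₀) := by
  refine tendsto_nhdsWithin_iff.2 ⟨?_, ?_⟩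
  · have hcont : Continuous fun t : ℝ => x₀ + t • v := by fun_prop
    simpa using (hcont.tendsto 0).mono_left nhdsWithin_le_nhds
  · filter_upwards [self_mem_nhdsWithin] with t (ht : t ≠ 0)
    simpa [ht] using hv

section

variable {g : X → EReal} {x₀ : X} {p : X →L[ℝ] ℝ} {a : ℝ}

theorem frechetQuotient_of_coe (ha : g x₀ = a) {x : X} {b : ℝ} (hb : g x = b) :
    frechetQuotient g x₀ p x = (((b - a - p (x - x₀)) / ‖x - x₀‖ : ℝ) : EReal) := by
  rw [frechetQuotient, ha, hb, div_eq_mul_inv]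
  norm_cast

theorem frechetQuotient_of_top (ha : g x₀ = a) {x : X} (hx : x ≠ x₀) (hgx : g x = ⊤) :
    frechetQuotient g x₀ p x = ⊤ := by
  rw [frechetQuotient, hgx, ha, EReal.top_sub_coe, EReal.top_sub_coe,
    EReal.top_mul_coe_of_pos (inv_pos.2 (norm_pos_iff.2 (sub_ne_zero.2 hx)))]

theorem neg_le_frechetQuotient_iff (ha : g x₀ = a) {x : X} (hx : x ≠ x₀) (ε : ℝ) :
    -(ε : EReal) ≤ frechetQuotient g x₀ p x ↔
      ((p (x - x₀) : ℝ) : EReal) ≤ g x - g x₀ + ((ε * ‖x - x₀‖ : ℝ) : EReal) := by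
  have hpos : 0 < ‖x - x₀‖⁻¹ := inv_pos.2 (norm_pos_iff.2 (sub_ne_zero.2 hx))
  induction hgx : g x using EReal.rec with
  | bot =>
    rw [frechetQuotient, hgx, EReal.bot_sub, EReal.bot_sub, EReal.bot_mul_coe_of_pos hpos,
      EReal.bot_add, ← EReal.coe_neg]
    simp only [le_bot_iff, EReal.coe_ne_bot]
  | top =>
    rw [frechetQuotient_of_top ha hx hgx, ha, EReal.top_sub_coe, EReal.top_add_coe]
    simp only [le_top]
  | coe b =>
    rw [frechetQuotient_of_coe ha hgx, ha, ← EReal.coe_neg, ← EReal.coe_sub, ← EReal.coe_add,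
      EReal.coe_le_coe_iff, EReal.coe_le_coe_iff, le_div_iff₀ (inv_pos.1 hpos)]
    constructor <;> intro h <;> linarith

theorem frechetQuotient_segment_le (hgbot : ∀ x, g x ≠ ⊥) (hgconv : ERealConvexOn g)
    (ha : g x₀ = a) {x : X} (hx : x ≠ x₀) {t : ℝ} (ht₀ : 0 < t) (ht₁ : t ≤ 1) :
    frechetQuotient g x₀ p (x₀ + t • (x - x₀)) ≤ frechetQuotient g x₀ p x := by
  have hpos : 0 < ‖x - x₀‖ := norm_pos_iff.2 (sub_ne_zero.2 hx)
  induction hgx : g x using EReal.rec with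
  | bot => exact absurd hgx (hgbot x)
  | top => exact (frechetQuotient_of_top ha hx hgx).symm ▸ le_top
  | coe b =>
    -- convexity on [x₀, x] with g x₀ = a: g (x₀ + t • (x - x₀)) - a ≤ t * (g x - a)
    have hconv : g (x₀ + t • (x - x₀)) ≤ ((t * b + (1 - t) * a : ℝ) : EReal) := by
      have := hgconv x x₀ t ht₀.le ht₁
      rw [hgx, ha] at this
      convert this using 1
      · congr 1; module
      · norm_cast
    obtain ⟨d, hd⟩ : ∃ d : ℝ, g (x₀ + t • (x - x₀)) = d :=
      ⟨_, (EReal.coe_toReal (hconv.trans_lt (EReal.coe_lt_top _)).ne (hgbot _)).symm⟩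
    have hdle : d ≤ t * b + (1 - t) * a := by rw [hd] at hconv; exact_mod_cast hconv
    rw [frechetQuotient_of_coe ha hd, frechetQuotient_of_coe ha hgx, EReal.coe_le_coe_iff,
      add_sub_cancel_left, map_smul, smul_eq_mul, norm_smul, Real.norm_of_nonneg ht₀.le,
      div_le_div_iff₀ (by positivity) hpos]
    nlinarith [mul_le_mul_of_nonneg_left hdle hpos.le]

theorem liminf_frechetQuotient_le (hgbot : ∀ x, g x ≠ ⊥) (hgconv : ERealConvexOn g)
    (ha : g x₀ = a) {x : X} (hx : x ≠ x₀) :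
    liminf (frechetQuotient g x₀ p) (𝓝[≠] x₀) ≤ frechetQuotient g x₀ p x := by
  have hseg := (tendsto_add_smul_nhdsNE x₀ (sub_ne_zero.2 hx)).mono_left (nhdsGT_le_nhdsNE 0)
  refine hseg.liminf_le_liminf_comp.trans (liminf_le_of_frequently_le' (Eventually.frequently ?_))
  filter_upwards [Ioo_mem_nhdsGT one_pos] with t ht
  exact frechetQuotient_segment_le hgbot hgconv ha hx ht.1 ht.2.le

end

theorem stmt4_general (g : X → EReal) (hgbot : ∀ x, g x ≠ ⊥) (hgconv : ERealConvexOn g)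
    (x₀ : X) (hdom : g x₀ ≠ ⊤) (ε : ℝ) (p : X →L[ℝ] ℝ) :
    p ∈ eFrechetSub ε g x₀ ↔
      ∀ x : X, ((p (x - x₀) : ℝ) : EReal) ≤ g x - g x₀ + ((ε * ‖x - x₀‖ : ℝ) : EReal) := by
  obtain ⟨a, ha⟩ : ∃ a : ℝ, g x₀ = a := ⟨_, (EReal.coe_toReal hdom (hgbot x₀)).symm⟩
  change -(ε : EReal) ≤ liminf (frechetQuotient g x₀ p) (𝓝[≠] x₀) ↔ _
  refine ⟨fun hp x => ?_, fun H => le_liminf_of_le (by isBoundedDefault) ?_⟩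
  · rcases eq_or_ne x x₀ with rfl | hx
    · simp [ha]
    · exact (neg_le_frechetQuotient_iff ha hx ε).1
        (hp.trans (liminf_frechetQuotient_le hgbot hgconv ha hx))
  · filter_upwards [self_mem_nhdsWithin] with x hx
    exact (neg_le_frechetQuotient_iff ha hx ε).2 (H x)

theorem stmt4 (g : X → EReal) (hgbot : ∀ x, g x ≠ ⊥) (hgconv : ERealConvexOn g)
    (x₀ : X) (hdom : g x₀ ≠ ⊤) (ε : ℝ) (hε : 0 ≤ ε) (p : X →L[ℝ] ℝ) :
    p ∈ eFrechetSub ε g x₀ ↔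
      ∀ x : X, ((p (x - x₀) : ℝ) : EReal) ≤ g x - g x₀ + ((ε * ‖x - x₀‖ : ℝ) : EReal) :=
  stmt4_general g hgbot hgconv x₀ hdom ε p
end
end

section
/- Let X be a normed space, φ: X → (-∞,∞] with φ(0) = 0 coercive with constant m > 0 (i.e., m‖x‖ ≤ φ(x) for all x), and f: X → (-∞,∞] satisfying the center-Lipschitz condition |f(x) − f(x̄)| ≤ ℓ‖x − x̄‖ for all x ∈ dom f, where 0 ≤ ℓ < m. Let T(x) = inf{φ(y−x)+f(y) : y ∈ X} and suppose x̄ ∈ dom T with T(x̄) = f(x̄). If ε ≥ 0 and x* ∈ ∂̂_ε f(x̄) ∩ [−∂̂_ε φ(0)], then x* ∈ ∂̂_{αε} T(x̄), where α := 2(‖x*‖ + m)(m − ℓ)^{-1} + 1. -/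
noncomputable section
open Filter Topology

variable {X : Type*} [NormedAddCommGroup X] [NormedSpace ℝ X]

/-! Fix ε' > ε; the two ε-subgradient inequalities then hold with ε' on small balls around x̄
and around 0. For x near x̄, split the infimum defining T(x) at ‖y - x̄‖ = R‖x - x̄‖ with
R = (‖x*‖ + m)/(m - ℓ). For far y, coercivity of φ beats the center-Lipschitz decrease of f:
φ(y - x) + f(y) ≥ f(x̄) + ‖x*‖‖x - x̄‖. For near y both ε'-inequalities apply, the x*-terms
telescope to ⟨x*, x - x̄⟩, and ‖y - x‖ + ‖y - x̄‖ ≤ (2R + 1)‖x - x̄‖. Since T(x̄) = f(x̄), this is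
the (2R + 1)ε'-subgradient inequality for T at x̄, and ε' ↓ ε. -/

namespace EReal

lemma coe_le_sub_sub_mul_inv_iff {a : EReal} {b d r t : ℝ} (ht : 0 < t) :
    (r : EReal) ≤ (a - b - d) * ((t⁻¹ : ℝ) : EReal) ↔ ((b + d + r * t : ℝ) : EReal) ≤ a := by
  induction a using EReal.rec with
  | bot =>
    simp only [bot_sub, bot_mul_of_pos (EReal.coe_pos.2 (inv_pos.2 ht)), le_bot_iff, coe_ne_bot]
  | top => simp [top_mul_of_pos (EReal.coe_pos.2 (inv_pos.2 ht))]
  | coe a =>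
    rw [← coe_sub, ← coe_sub, ← coe_mul, EReal.coe_le_coe_iff, EReal.coe_le_coe_iff,
      ← div_eq_mul_inv, le_div_iff₀ ht]
    constructor <;> intro h <;> linarith

lemma coe_sub_le_of_abs_toReal_sub_le {ι : Type*} {f : ι → EReal} {c : ℝ} {b : ι → ℝ}
    (hbot : ∀ i, f i ≠ ⊥) (h : ∀ i, f i ≠ ⊤ → |(f i).toReal - c| ≤ b i) (i : ι) :
    ((c - b i : ℝ) : EReal) ≤ f i := by
  by_cases hi : f i = ⊤
  · simp [hi]
  · rw [← coe_toReal hi (hbot i), EReal.coe_le_coe_iff]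
    linarith [(abs_le.1 (h i hi)).1]

end EReal

theorem mem_eFrechetSub_iff {g : X → EReal} {x₀ : X} {c ε : ℝ} {p : X →L[ℝ] ℝ}
    (hc : g x₀ = c) :
    p ∈ eFrechetSub ε g x₀ ↔ ∀ ε' > ε,
      ∀ᶠ x in 𝓝 x₀, ((c + p (x - x₀) - ε' * ‖x - x₀‖ : ℝ) : EReal) ≤ g x := by
  have quotient_iff : ∀ r : ℝ, ∀ x ≠ x₀,
      (r : EReal) ≤ (g x - g x₀ - ((p (x - x₀) : ℝ) : EReal)) * ((‖x - x₀‖⁻¹ : ℝ) : EReal) ↔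
        ((c + p (x - x₀) + r * ‖x - x₀‖ : ℝ) : EReal) ≤ g x := fun r x hx => by
    rw [hc]; exact EReal.coe_le_sub_sub_mul_inv_iff (norm_pos_iff.2 (sub_ne_zero.2 hx))
  simp only [eFrechetSub, Set.mem_ofPred_eq]
  constructor
  · intro hp ε' hε'
    have hlt : ((-ε' : ℝ) : EReal) < -(ε : EReal) := by exact_mod_cast neg_lt_neg hε'
    filter_upwards
      [eventually_nhdsWithin_iff.1 (eventually_lt_of_lt_liminf (hlt.trans_le hp))] with x hx
    by_cases hxx₀ : x = x₀
    · simp [hxx₀, hc]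
    · simpa [sub_eq_add_neg] using (quotient_iff _ x hxx₀).1 (hx hxx₀).le
  · intro h
    refine le_of_forall_lt_imp_le_of_dense fun a ha => ?_
    induction a using EReal.rec with
    | bot => exact bot_le
    | top => exact absurd ha (not_lt.2 le_top)
    | coe r =>
      have hr : ε < -r := by
        rw [← EReal.coe_neg] at ha; exact lt_neg_of_lt_neg (by exact_mod_cast ha)
      refine le_liminf_of_le (by isBoundedDefault) ?_
      filter_upwards [eventually_nhdsWithin_of_eventually_nhds (h _ hr), self_mem_nhdsWithin]
        with x hx hxx₀
      exact (quotient_iff r x hxx₀).2 (by simpa [sub_eq_add_neg] using hx)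

theorem eventually_coe_le_infConv {φ f : X → EReal} {x₀ : X} {q : X →L[ℝ] ℝ} {m ℓ c ε : ℝ}
    (hm : 0 ≤ m) (hℓm : ℓ < m) (hε : 0 ≤ ε)
    (hcoer : ∀ u, ((m * ‖u‖ : ℝ) : EReal) ≤ φ u)
    (hlip : ∀ y, ((c - ℓ * ‖y - x₀‖ : ℝ) : EReal) ≤ f y)
    (hφ : ∀ᶠ u in 𝓝 0, ((-q u - ε * ‖u‖ : ℝ) : EReal) ≤ φ u)
    (hf : ∀ᶠ y in 𝓝 x₀, ((c + q (y - x₀) - ε * ‖y - x₀‖ : ℝ) : EReal) ≤ f y) :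
    ∀ᶠ x in 𝓝 x₀, ((c + q (x - x₀) - (2 * (‖q‖ + m) * (m - ℓ)⁻¹ + 1) * ε * ‖x - x₀‖ : ℝ) :
      EReal) ≤ infConv φ f x := by
  set R := (‖q‖ + m) * (m - ℓ)⁻¹
  have hmℓ : 0 < m - ℓ := sub_pos.2 hℓm
  have hR : (m - ℓ) * R = ‖q‖ + m := by rw [mul_comm]; exact inv_mul_cancel_right₀ hmℓ.ne' _
  have hR0 : 0 ≤ R := by positivity
  obtain ⟨δ₁, hδ₁, hf⟩ := Metric.eventually_nhds_iff.1 hf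
  obtain ⟨δ₂, hδ₂, hφ⟩ := Metric.eventually_nhds_iff.1 hφ
  have hsmall : Tendsto (fun x => (R + 1) * ‖x - x₀‖) (𝓝 x₀) (𝓝 0) := by
    simpa using (tendsto_norm_sub_self x₀).const_mul (R + 1)
  rw [show 2 * (‖q‖ + m) * (m - ℓ)⁻¹ + 1 = 2 * R + 1 by ring]
  filter_upwards [hsmall.eventually_lt_const (lt_min hδ₁ hδ₂)] with x hx
  refine le_iInf fun y => ?_
  rcases lt_or_ge (R * ‖x - x₀‖) ‖y - x₀‖ with hfar | hnear
  · refine le_trans ?_ (add_le_add (hcoer (y - x)) (hlip y))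
    rw [← EReal.coe_add, EReal.coe_le_coe_iff]
    have hq : q (x - x₀) ≤ ‖q‖ * ‖x - x₀‖ := le_abs_self _ |>.trans (q.le_opNorm _)
    have hy : ‖y - x₀‖ ≤ ‖y - x‖ + ‖x - x₀‖ := norm_sub_le_norm_sub_add_norm_sub y x x₀
    have hφy : m * (‖y - x₀‖ - ‖x - x₀‖) ≤ m * ‖y - x‖ :=
      mul_le_mul_of_nonneg_left (by linarith) hm
    have hgap : (‖q‖ + m) * ‖x - x₀‖ ≤ (m - ℓ) * ‖y - x₀‖ := by
      rw [← hR, mul_assoc]; exact mul_le_mul_of_nonneg_left hfar.le hmℓ.le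
    have hslack : 0 ≤ (2 * R + 1) * ε * ‖x - x₀‖ := by positivity
    linarith
  · have hy : ‖y - x‖ ≤ ‖y - x₀‖ + ‖x - x₀‖ := by
      simpa [norm_sub_rev x₀ x] using norm_sub_le_norm_sub_add_norm_sub y x₀ x
    have hx₀ : ‖y - x₀‖ < δ₁ := by linarith [norm_nonneg (x - x₀), min_le_left δ₁ δ₂]
    have hx : ‖y - x‖ < δ₂ := by linarith [norm_nonneg (x - x₀), min_le_right δ₁ δ₂]
    refine le_trans ?_ (add_le_add (hφ (by rwa [dist_zero_right])) (hf (by rwa [dist_eq_norm])))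
    rw [← EReal.coe_add, EReal.coe_le_coe_iff]
    have hq : q (y - x₀) - q (y - x) = q (x - x₀) := by rw [← map_sub]; congr 1; abel
    have hsum : ‖y - x‖ + ‖y - x₀‖ ≤ (2 * R + 1) * ‖x - x₀‖ := by linarith
    linarith [mul_le_mul_of_nonneg_left hsum hε]

theorem stmt9_general (φ f : X → EReal) (hfbot : ∀ x, f x ≠ ⊥)
    (hφ0 : φ 0 = 0) (m : ℝ) (hm : 0 < m)
    (hcoer : ∀ x : X, ((m * ‖x‖ : ℝ) : EReal) ≤ φ x)
    (x₀ : X) (ℓ : ℝ) (hℓm : ℓ < m)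
    (hlip : ∀ x : X, f x ≠ ⊤ → |(f x).toReal - (f x₀).toReal| ≤ ℓ * ‖x - x₀‖)
    (hdom : infConv φ f x₀ ≠ ⊤) (hS : infConv φ f x₀ = f x₀)
    (ε : ℝ) (hε : 0 ≤ ε) (p : X →L[ℝ] ℝ)
    (hp : p ∈ eFrechetSub ε f x₀ ∧ -p ∈ eFrechetSub ε φ 0) :
    p ∈ eFrechetSub ((2 * (‖p‖ + m) * (m - ℓ)⁻¹ + 1) * ε) (infConv φ f) x₀ := by
  set α := 2 * (‖p‖ + m) * (m - ℓ)⁻¹ + 1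
  have hα : 0 < α := by have := sub_pos.2 hℓm; positivity
  have hfx₀ : f x₀ = ((f x₀).toReal : EReal) := (EReal.coe_toReal (hS ▸ hdom) (hfbot x₀)).symm
  rw [mem_eFrechetSub_iff (hS.trans hfx₀)]
  intro ε' hε'
  have hε'α : ε < ε' / α := by rwa [lt_div_iff₀ hα, mul_comm]
  have hφloc := (mem_eFrechetSub_iff (c := 0) (by simpa using hφ0)).1 hp.2 _ hε'α
  have hfloc := (mem_eFrechetSub_iff hfx₀).1 hp.1 _ hε'α
  have hT := eventually_coe_le_infConv hm.le hℓm (hε.trans hε'α.le) hcoer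
    (EReal.coe_sub_le_of_abs_toReal_sub_le hfbot hlip) (by simpa using hφloc) hfloc
  rwa [mul_div_cancel₀ _ hα.ne'] at hT

theorem stmt9 (φ f : X → EReal) (hφbot : ∀ x, φ x ≠ ⊥) (hfbot : ∀ x, f x ≠ ⊥)
    (hφ0 : φ 0 = 0) (m : ℝ) (hm : 0 < m)
    (hcoer : ∀ x : X, ((m * ‖x‖ : ℝ) : EReal) ≤ φ x)
    (x₀ : X) (ℓ : ℝ) (hℓ0 : 0 ≤ ℓ) (hℓm : ℓ < m)
    (hlip : ∀ x : X, f x ≠ ⊤ → |(f x).toReal - (f x₀).toReal| ≤ ℓ * ‖x - x₀‖)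
    (hdom : infConv φ f x₀ ≠ ⊤) (hS : infConv φ f x₀ = f x₀)
    (ε : ℝ) (hε : 0 ≤ ε) (p : X →L[ℝ] ℝ)
    (hp : p ∈ eFrechetSub ε f x₀ ∧ -p ∈ eFrechetSub ε φ 0) :
    p ∈ eFrechetSub ((2 * (‖p‖ + m) * (m - ℓ)⁻¹ + 1) * ε) (infConv φ f) x₀ :=
  stmt9_general φ f hfbot hφ0 m hm hcoer x₀ ℓ hℓm hlip hdom hS ε hε p hp
end
end

section
/- Let X be a normed space, φ: X → (-∞,∞] with φ(0) = 0 coercive with constant m > 0, and f: X → (-∞,∞] center-Lipschitz on dom f at x̄ with constant ℓ, 0 ≤ ℓ < m. Let T(x) = inf{φ(y−x)+f(y) : y ∈ X} and suppose x̄ ∈ dom T with T(x̄) = f(x̄). Then the Fréchet subdifferential of T at x̄ satisfies ∂̂T(x̄) = ∂̂f(x̄) ∩ [−∂̂φ(0)]. -/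
/-!
Since `φ 0 = 0`, the infimal convolution satisfies `T ≤ f` with equality at `x₀`, and
`T (x₀ - u) ≤ φ u + f x₀`; these two majorants, touching `T` at `x₀`, give the inclusion `⊆`.
Conversely, let `p ∈ ∂̂f(x₀)` with `-p ∈ ∂̂φ(0)` and put `K = (m + ‖p‖) / (m - ℓ)`. For `y` within
`K ‖x - x₀‖` of `x₀` the two local affine minorants of `f` near `x₀` and of `φ` near `0` add up to
`φ (y - x) + f y ≥ f x₀ + p (x - x₀) - O(ε) ‖x - x₀‖`; for farther `y`, coercivity of `φ` and the
center-Lipschitz bound on `f` already give `φ (y - x) + f y ≥ f x₀ + ‖p‖ ‖x - x₀‖`.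
-/
noncomputable section
open Filter Topology

variable {X : Type*} [NormedAddCommGroup X] [NormedSpace ℝ X]

theorem EReal.zero_le_liminf_iff {α : Type*} {u : α → EReal} {F : Filter α} :
    0 ≤ liminf u F ↔ ∀ ε : ℝ, 0 < ε → ∀ᶠ a in F, ((-ε : ℝ) : EReal) ≤ u a := by
  rw [le_liminf_iff']
  refine ⟨fun h ε hε => h _ (by exact_mod_cast neg_lt_zero.2 hε), fun h y hy => ?_⟩
  obtain ⟨c, hyc, hc⟩ := EReal.exists_between_coe_real hy
  exact (h (-c) (by simpa using hc)).mono fun a ha => hyc.le.trans (by simpa using ha)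

theorem EReal.neg_le_sub_sub_mul_inv_iff (A : EReal) (c d ε : ℝ) {r : ℝ} (hr : 0 < r) :
    ((-ε : ℝ) : EReal) ≤ (A - c - d) * ((r⁻¹ : ℝ) : EReal) ↔ ((c + d - ε * r : ℝ) : EReal) ≤ A := by
  have hr' : (0 : EReal) < ((r⁻¹ : ℝ) : EReal) := by exact_mod_cast inv_pos.2 hr
  induction A using EReal.rec with
  | bot =>
    rw [EReal.bot_sub, EReal.bot_sub, EReal.bot_mul_of_pos hr']
    simp only [le_bot_iff, EReal.coe_ne_bot]
  | coe a =>
    norm_cast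
    rw [le_mul_inv_iff₀ hr]
    constructor <;> intro <;> linarith
  | top =>
    rw [EReal.top_sub_coe, EReal.top_sub_coe, EReal.top_mul_of_pos hr']
    simp only [le_top]

theorem mem_eFrechetSub_zero_iff {g : X → EReal} {x₀ : X} {c : ℝ} (hc : g x₀ = c)
    {p : X →L[ℝ] ℝ} :
    p ∈ eFrechetSub 0 g x₀ ↔
      ∀ ε : ℝ, 0 < ε → ∀ᶠ x in 𝓝 x₀, ((c + p (x - x₀) - ε * ‖x - x₀‖ : ℝ) : EReal) ≤ g x := by
  simp only [eFrechetSub, Set.mem_ofPred_eq, EReal.coe_zero, neg_zero, EReal.zero_le_liminf_iff]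
  refine forall₂_congr fun ε _ => ?_
  rw [eventually_nhdsWithin_iff]
  refine eventually_congr (Eventually.of_forall fun x => ?_)
  by_cases hx : x = x₀
  · subst hx
    simp [hc]
  · rw [hc, EReal.neg_le_sub_sub_mul_inv_iff _ _ _ _ (norm_sub_pos_iff.2 hx)]
    exact ⟨fun h => h hx, fun h _ => h⟩

theorem eFrechetSub_zero_mono {g h : X → EReal} {x₀ : X} {c : ℝ} (hg : g x₀ = c) (hh : h x₀ = c)
    (hle : ∀ x, g x ≤ h x) : eFrechetSub 0 g x₀ ⊆ eFrechetSub 0 h x₀ := by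
  intro p hp
  rw [mem_eFrechetSub_zero_iff hg] at hp
  rw [mem_eFrechetSub_zero_iff hh]
  exact fun ε hε => (hp ε hε).mono fun x hx => hx.trans (hle x)

theorem neg_mem_eFrechetSub_of_le_add {g φ : X → EReal} {x₀ : X} {c : ℝ} (hg : g x₀ = c)
    (hφ0 : φ 0 = 0) (hle : ∀ u, g (x₀ - u) ≤ φ u + c) {p : X →L[ℝ] ℝ}
    (hp : p ∈ eFrechetSub 0 g x₀) : -p ∈ eFrechetSub 0 φ 0 := by
  rw [mem_eFrechetSub_zero_iff hg] at hp
  rw [mem_eFrechetSub_zero_iff (hφ0.trans EReal.coe_zero.symm)]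
  intro ε hε
  have hshift : Tendsto (x₀ - ·) (𝓝 0) (𝓝 x₀) := (continuous_sub_left x₀).tendsto' 0 x₀ (sub_zero x₀)
  filter_upwards [hshift.eventually (hp ε hε)] with u hu
  have hu' : ((-p u - ε * ‖u‖ : ℝ) : EReal) + c ≤ φ u + c := by
    rw [← EReal.coe_add]
    convert hu.trans (hle u) using 3
    simp only [sub_sub_cancel_left, map_neg, norm_neg]
    ring
  simpa using (EReal.addLECancellable_coe c).add_le_add_iff_right.1 hu'

section InfConv

variable {φ f : X → EReal} {x₀ : X} {F₀ m ℓ K : ℝ} {p : X →L[ℝ] ℝ}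

theorem le_infConv_summand_of_far (hm : 0 ≤ m) (hℓm : ℓ ≤ m)
    (hcoer : ∀ x : X, ((m * ‖x‖ : ℝ) : EReal) ≤ φ x) (hfbot : ∀ x, f x ≠ ⊥) (hF₀ : f x₀ = F₀)
    (hlip : ∀ x : X, f x ≠ ⊤ → |(f x).toReal - (f x₀).toReal| ≤ ℓ * ‖x - x₀‖)
    (hK : m + ‖p‖ ≤ (m - ℓ) * K) {x y : X} (hy : K * ‖x - x₀‖ < ‖y - x₀‖) :
    ((F₀ + p (x - x₀) : ℝ) : EReal) ≤ φ (y - x) + f y := by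
  by_cases hfy : f y = ⊤
  · rw [hfy, EReal.add_top_of_ne_bot (ne_bot_of_le_ne_bot (EReal.coe_ne_bot _) (hcoer _))]
    exact le_top
  have hfy_eq : f y = (f y).toReal := (EReal.coe_toReal hfy (hfbot y)).symm
  have hfy_ge : F₀ - ℓ * ‖y - x₀‖ ≤ (f y).toReal := by
    have := (abs_le.1 (hlip y hfy)).1
    rw [hF₀, EReal.toReal_coe] at this
    linarith
  have hp_le : p (x - x₀) ≤ ‖p‖ * ‖x - x₀‖ := (le_abs_self _).trans (p.le_opNorm _)
  have htri : ‖y - x₀‖ ≤ ‖y - x‖ + ‖x - x₀‖ := norm_sub_le_norm_sub_add_norm_sub y x x₀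
  have h₁ := mul_le_mul_of_nonneg_left htri hm
  have h₂ := mul_le_mul_of_nonneg_left hy.le (sub_nonneg.2 hℓm)
  have h₃ := mul_le_mul_of_nonneg_right hK (norm_nonneg (x - x₀))
  calc ((F₀ + p (x - x₀) : ℝ) : EReal) ≤ ((m * ‖y - x‖ + (f y).toReal : ℝ) : EReal) := by
        rw [EReal.coe_le_coe_iff]
        nlinarith
    _ = ((m * ‖y - x‖ : ℝ) : EReal) + f y := by rw [EReal.coe_add, ← hfy_eq]
    _ ≤ φ (y - x) + f y := add_le_add_left (hcoer _) _

theorem le_infConv_summand_of_near {η δ₁ δ₂ : ℝ} (hη : 0 ≤ η)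
    (hf_loc : ∀ y, ‖y - x₀‖ < δ₁ → ((F₀ + p (y - x₀) - η * ‖y - x₀‖ : ℝ) : EReal) ≤ f y)
    (hφ_loc : ∀ u, ‖u‖ < δ₂ → ((-p u - η * ‖u‖ : ℝ) : EReal) ≤ φ u) {x y : X}
    (hy : ‖y - x₀‖ ≤ K * ‖x - x₀‖) (hx₁ : (K + 1) * ‖x - x₀‖ < δ₁)
    (hx₂ : (K + 1) * ‖x - x₀‖ < δ₂) :
    ((F₀ + p (x - x₀) - η * (2 * K + 1) * ‖x - x₀‖ : ℝ) : EReal) ≤ φ (y - x) + f y := by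
  have htri : ‖y - x‖ ≤ ‖y - x₀‖ + ‖x - x₀‖ := by
    rw [norm_sub_rev x x₀]
    exact norm_sub_le_norm_sub_add_norm_sub y x₀ x
  have hlin : p (y - x₀) - p (y - x) = p (x - x₀) := by rw [← map_sub]; congr 1; abel
  have hyx : ‖y - x‖ ≤ (K + 1) * ‖x - x₀‖ := by linarith
  calc ((F₀ + p (x - x₀) - η * (2 * K + 1) * ‖x - x₀‖ : ℝ) : EReal)
      ≤ ((-p (y - x) - η * ‖y - x‖ + (F₀ + p (y - x₀) - η * ‖y - x₀‖) : ℝ) : EReal) := by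
        rw [EReal.coe_le_coe_iff]
        linarith [mul_le_mul_of_nonneg_left hy hη, mul_le_mul_of_nonneg_left hyx hη]
    _ ≤ φ (y - x) + f y := by
        rw [EReal.coe_add]
        exact add_le_add (hφ_loc _ (by linarith)) (hf_loc _ (by linarith [norm_nonneg (x - x₀)]))

theorem le_infConv_of_local_bounds {η δ₁ δ₂ : ℝ} (hm : 0 ≤ m) (hℓm : ℓ ≤ m)
    (hcoer : ∀ x : X, ((m * ‖x‖ : ℝ) : EReal) ≤ φ x) (hfbot : ∀ x, f x ≠ ⊥) (hF₀ : f x₀ = F₀)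
    (hlip : ∀ x : X, f x ≠ ⊤ → |(f x).toReal - (f x₀).toReal| ≤ ℓ * ‖x - x₀‖)
    (hK0 : 0 ≤ K) (hK : m + ‖p‖ ≤ (m - ℓ) * K) (hη : 0 ≤ η)
    (hf_loc : ∀ y, ‖y - x₀‖ < δ₁ → ((F₀ + p (y - x₀) - η * ‖y - x₀‖ : ℝ) : EReal) ≤ f y)
    (hφ_loc : ∀ u, ‖u‖ < δ₂ → ((-p u - η * ‖u‖ : ℝ) : EReal) ≤ φ u) {x : X}
    (hx₁ : (K + 1) * ‖x - x₀‖ < δ₁) (hx₂ : (K + 1) * ‖x - x₀‖ < δ₂) :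
    ((F₀ + p (x - x₀) - η * (2 * K + 1) * ‖x - x₀‖ : ℝ) : EReal) ≤ infConv φ f x := by
  refine le_iInf fun y => ?_
  rcases le_or_gt ‖y - x₀‖ (K * ‖x - x₀‖) with hnear | hfar
  · exact le_infConv_summand_of_near hη hf_loc hφ_loc hnear hx₁ hx₂
  · refine le_trans ?_ (le_infConv_summand_of_far hm hℓm hcoer hfbot hF₀ hlip hK hfar)
    rw [EReal.coe_le_coe_iff]
    have : 0 ≤ η * (2 * K + 1) * ‖x - x₀‖ := by positivity
    linarith

theorem mem_eFrechetSub_infConv (hm : 0 < m) (hℓm : ℓ < m) (hφ0 : φ 0 = 0)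
    (hcoer : ∀ x : X, ((m * ‖x‖ : ℝ) : EReal) ≤ φ x) (hfbot : ∀ x, f x ≠ ⊥) (hF₀ : f x₀ = F₀)
    (hlip : ∀ x : X, f x ≠ ⊤ → |(f x).toReal - (f x₀).toReal| ≤ ℓ * ‖x - x₀‖)
    (hT : infConv φ f x₀ = F₀) (hpf : p ∈ eFrechetSub 0 f x₀) (hpφ : -p ∈ eFrechetSub 0 φ 0) :
    p ∈ eFrechetSub 0 (infConv φ f) x₀ := by
  rw [mem_eFrechetSub_zero_iff hF₀] at hpf
  rw [mem_eFrechetSub_zero_iff (hφ0.trans EReal.coe_zero.symm)] at hpφ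
  rw [mem_eFrechetSub_zero_iff hT]
  set K := (m + ‖p‖) / (m - ℓ)
  have hK0 : 0 ≤ K := div_nonneg (by positivity) (by linarith)
  have hK : m + ‖p‖ ≤ (m - ℓ) * K := (mul_div_cancel₀ _ (by linarith : m - ℓ ≠ 0)).ge
  intro ε hε
  set η := ε / (2 * K + 1)
  have hη : 0 < η := by positivity
  obtain ⟨δ₁, hδ₁, hf_loc⟩ := Metric.eventually_nhds_iff.1 (hpf η hη)
  obtain ⟨δ₂, hδ₂, hφ_loc⟩ := Metric.eventually_nhds_iff.1 (hpφ η hη)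
  rw [Metric.eventually_nhds_iff]
  refine ⟨min δ₁ δ₂ / (K + 1), by positivity, fun x hx => ?_⟩
  have hx' : (K + 1) * ‖x - x₀‖ < min δ₁ δ₂ := by
    rw [dist_eq_norm, lt_div_iff₀ (by positivity)] at hx
    linarith
  have := le_infConv_of_local_bounds hm.le hℓm.le hcoer hfbot hF₀ hlip hK0 hK hη.le
    (fun y hy => hf_loc (by rwa [dist_eq_norm]))
    (fun u hu => by simpa using hφ_loc (by rwa [dist_zero_right]))
    (hx'.trans_le (min_le_left _ _)) (hx'.trans_le (min_le_right _ _))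
  rwa [div_mul_cancel₀ _ (by positivity : 2 * K + 1 ≠ 0)] at this

end InfConv

theorem stmt10_general (φ f : X → EReal) (hfbot : ∀ x, f x ≠ ⊥)
    (hφ0 : φ 0 = 0) (m : ℝ) (hm : 0 < m)
    (hcoer : ∀ x : X, ((m * ‖x‖ : ℝ) : EReal) ≤ φ x)
    (x₀ : X) (ℓ : ℝ) (hℓm : ℓ < m)
    (hlip : ∀ x : X, f x ≠ ⊤ → |(f x).toReal - (f x₀).toReal| ≤ ℓ * ‖x - x₀‖)
    (hdom : infConv φ f x₀ ≠ ⊤) (hS : infConv φ f x₀ = f x₀) :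
    eFrechetSub 0 (infConv φ f) x₀
      = eFrechetSub 0 f x₀ ∩ {p | -p ∈ eFrechetSub 0 φ 0} := by
  obtain ⟨F₀, hF₀⟩ : ∃ F₀ : ℝ, f x₀ = F₀ := ⟨_, (EReal.coe_toReal (hS ▸ hdom) (hfbot x₀)).symm⟩
  have hT : infConv φ f x₀ = F₀ := hS.trans hF₀
  have hT_le : ∀ x, infConv φ f x ≤ f x := fun x =>
    (iInf_le _ x).trans_eq (by rw [sub_self, hφ0, zero_add])
  have hT_shift_le : ∀ u, infConv φ f (x₀ - u) ≤ φ u + F₀ := fun u =>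
    (iInf_le _ x₀).trans_eq (by rw [sub_sub_cancel, hF₀])
  ext p
  constructor
  · intro hp
    exact ⟨eFrechetSub_zero_mono hT hF₀ hT_le hp, neg_mem_eFrechetSub_of_le_add hT hφ0 hT_shift_le hp⟩
  · rintro ⟨hpf, hpφ⟩
    exact mem_eFrechetSub_infConv hm hℓm hφ0 hcoer hfbot hF₀ hlip hT hpf hpφ

theorem stmt10 (φ f : X → EReal) (hφbot : ∀ x, φ x ≠ ⊥) (hfbot : ∀ x, f x ≠ ⊥)
    (hφ0 : φ 0 = 0) (m : ℝ) (hm : 0 < m)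
    (hcoer : ∀ x : X, ((m * ‖x‖ : ℝ) : EReal) ≤ φ x)
    (x₀ : X) (ℓ : ℝ) (hℓ0 : 0 ≤ ℓ) (hℓm : ℓ < m)
    (hlip : ∀ x : X, f x ≠ ⊤ → |(f x).toReal - (f x₀).toReal| ≤ ℓ * ‖x - x₀‖)
    (hdom : infConv φ f x₀ ≠ ⊤) (hS : infConv φ f x₀ = f x₀) :
    eFrechetSub 0 (infConv φ f) x₀
      = eFrechetSub 0 f x₀ ∩ {p | -p ∈ eFrechetSub 0 φ 0} :=
  stmt10_general φ f hfbot hφ0 m hm hcoer x₀ ℓ hℓm hlip hdom hS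
end
end

section
/- Let X be a normed space, φ, f: X → (-∞,∞] with φ(0) = 0, T(x) = inf{φ(y−x)+f(y) : y ∈ X}, and x̄ with T(x̄) = f(x̄) finite. Then for every s > 0, the s-Hölder subdifferential satisfies ∂_s T(x̄) ⊂ ∂_s f(x̄) ∩ [−∂_s φ(0)]. -/
noncomputable section
open Filter Topology

variable {X : Type*} [NormedAddCommGroup X] [NormedSpace ℝ X]

/-!
Choosing `y = x` in the infimum gives `T ≤ f`, and choosing `y = x₀` gives
`T x ≤ φ (x₀ - x) + f x₀`. As `T x₀ = f x₀`, the increments of `T` at `x₀` are dominated by those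
of `f` at `x₀` and by those of `φ (x₀ - ·)` at `x₀`, so every lower Hölder estimate for `T` passes
to `f` and, after the change of variables `x ↦ x₀ - x`, to `φ` at `0` with the functional `-p`.
-/

theorem infConv_le_add {E : Type*} [NormedAddCommGroup E] (φ f : E → EReal) (x y : E) :
    infConv φ f x ≤ φ (y - x) + f y :=
  iInf_le (fun y => φ (y - x) + f y) y

theorem infConv_le_self {E : Type*} [NormedAddCommGroup E] {φ : E → EReal} (hφ0 : φ 0 = 0)
    (f : E → EReal) (x : E) : infConv φ f x ≤ f x := by
  simpa [hφ0] using infConv_le_add φ f x x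

theorem holderSub_subset_of_sub_le {s : ℝ} {g h : X → EReal} {x₀ : X}
    (hle : ∀ᶠ x in 𝓝[≠] x₀, g x - g x₀ ≤ h x - h x₀) :
    holderSub s g x₀ ⊆ holderSub s h x₀ := by
  intro p (hp : (⊥ : EReal) < _)
  refine lt_of_lt_of_le hp (liminf_le_liminf ?_)
  filter_upwards [hle] with x hx
  refine mul_le_mul_of_nonneg_right (EReal.sub_le_sub hx le_rfl) ?_
  exact_mod_cast inv_nonneg.2 (by positivity)

theorem map_sub_left_nhdsNE {G : Type*} [TopologicalSpace G] [AddGroup G]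
    [IsTopologicalAddGroup G] (a : G) :
    map (fun x => a - x) (𝓝[≠] a) = 𝓝[≠] (0 : G) := by
  have hfun : (fun x : G => a - x) = ⇑((Homeomorph.neg G).trans (Homeomorph.addLeft a)) := by
    ext x; simp [sub_eq_add_neg]
  rw [hfun, Homeomorph.map_punctured_nhds_eq]
  simp

theorem neg_mem_holderSub_iff_mem_comp_sub_left {s : ℝ} {h : X → EReal} {x₀ : X}
    {p : X →L[ℝ] ℝ} :
    -p ∈ holderSub s h 0 ↔ p ∈ holderSub s (fun x => h (x₀ - x)) x₀ := by
  simp only [holderSub, Set.mem_ofPred_eq, ← map_sub_left_nhdsNE x₀, ← liminf_comp,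
    Function.comp_def, sub_zero, sub_self, norm_sub_rev x₀, neg_apply,
    map_sub, sub_neg_eq_add, neg_add_eq_sub]

theorem stmt15_general (φ f : X → EReal)
    (hφ0 : φ 0 = 0) (x₀ : X) (hS : infConv φ f x₀ = f x₀) :
    ∀ s : ℝ, 0 < s →
      holderSub s (infConv φ f) x₀ ⊆
        holderSub s f x₀ ∩ {p | -p ∈ holderSub s φ 0} := by
  intro s _ p hp
  refine ⟨holderSub_subset_of_sub_le ?_ hp, ?_⟩
  · filter_upwards with x
    rw [hS]
    exact EReal.sub_le_sub (infConv_le_self hφ0 f x) le_rfl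
  · rw [Set.mem_ofPred_eq, neg_mem_holderSub_iff_mem_comp_sub_left (x₀ := x₀)]
    refine holderSub_subset_of_sub_le ?_ hp
    filter_upwards with x
    rw [hS, sub_self, hφ0, sub_zero]
    exact EReal.sub_le_of_le_add (infConv_le_add φ f x x₀)

theorem stmt15 (φ f : X → EReal) (hφbot : ∀ x, φ x ≠ ⊥) (hfbot : ∀ x, f x ≠ ⊥)
    (hφ0 : φ 0 = 0) (x₀ : X) (hS : infConv φ f x₀ = f x₀) (hfin : f x₀ ≠ ⊤) :
    ∀ s : ℝ, 0 < s →
      holderSub s (infConv φ f) x₀ ⊆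
        holderSub s f x₀ ∩ {p | -p ∈ holderSub s φ 0} :=
  stmt15_general φ f hφ0 x₀ hS
end
end

section
/- Let X be a normed space, Ω a nonempty subset of X, x̄ ∈ Ω, and s > 0. Then the s-Hölder subdifferential of the distance function to Ω at x̄ satisfies ∂_s d(·;Ω)(x̄) = N_s(x̄;Ω) ∩ B*, where N_s(x̄;Ω) := ∂_s δ_Ω(x̄) and B* is the closed unit ball of X*. In particular for s = 1, the proximal subdifferential of the distance function at x̄ equals the proximal normal cone intersected with B*. -/
noncomputable section
open Filter Topology

variable {X : Type*} [NormedAddCommGroup X] [NormedSpace ℝ X]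

/-!
Near `x₀` the distance `d = infDist · Ω` vanishes on `Ω` and satisfies `d x ≤ ‖x - x₀‖`.
Comparing on `Ω` turns a Hölder subgradient of `d` into one of the indicator, and testing the
upper bound along rays `x₀ + t • u`, `t → 0⁺`, gives `p u ≤ ‖u‖`, i.e. `‖p‖ ≤ 1`.
Conversely, for `p` in the Hölder normal cone with `‖p‖ ≤ 1`, pick `ω ∈ Ω` with
`‖x - ω‖ < d x + ‖x - x₀‖ ^ (1 + s)`. Then `‖ω - x₀‖ ≤ 3 ‖x - x₀‖`, and splitting
`p (x - x₀) = p (x - ω) + p (ω - x₀)` bounds the first term by `‖x - ω‖` and the second by the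
normal-cone inequality at `ω`, which costs only `O(‖x - x₀‖ ^ (1 + s))`.
-/

open Metric

lemma EReal.bot_lt_liminf_iff {α : Type*} {F : Filter α} {f : α → EReal} :
    ⊥ < liminf f F ↔ ∃ m : ℝ, ∀ᶠ x in F, (m : EReal) ≤ f x := by
  constructor
  · intro h
    obtain ⟨a, ha, hba⟩ := lt_sSup_iff.mp (liminf_eq (f := F) (u := f) ▸ h)
    induction a with
    | bot => exact absurd hba (lt_irrefl _)
    | coe r => exact ⟨r, ha⟩
    | top => exact ⟨0, ha.mono fun x hx => le_top.trans hx⟩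
  · rintro ⟨m, hm⟩
    exact (EReal.bot_lt_coe m).trans_le (le_liminf_of_le (by isBoundedDefault) hm)

lemma mem_holderSub_iff {s : ℝ} {g : X → EReal} {x₀ : X} {p : X →L[ℝ] ℝ} :
    p ∈ holderSub s g x₀ ↔ ∃ m : ℝ, ∀ᶠ x in 𝓝[≠] x₀, (m : EReal) ≤
      (g x - g x₀ - ((p (x - x₀) : ℝ) : EReal)) * (((‖x - x₀‖ ^ (1 + s))⁻¹ : ℝ) : EReal) :=
  EReal.bot_lt_liminf_iff

lemma mem_holderSub_coe_iff {s : ℝ} {f : X → ℝ} {x₀ : X} {p : X →L[ℝ] ℝ} :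
    p ∈ holderSub s (fun x => (f x : EReal)) x₀ ↔
      ∃ m : ℝ, ∀ᶠ x in 𝓝[≠] x₀, m * ‖x - x₀‖ ^ (1 + s) ≤ f x - f x₀ - p (x - x₀) := by
  refine mem_holderSub_iff.trans (exists_congr fun m => ?_)
  refine eventually_congr (eventually_mem_nhdsWithin.mono fun x (hx : x ≠ x₀) => ?_)
  have hpos : 0 < ‖x - x₀‖ ^ (1 + s) := Real.rpow_pos_of_pos (norm_pos_iff.mpr (sub_ne_zero.mpr hx)) _
  rw [← EReal.coe_sub, ← EReal.coe_sub, ← EReal.coe_mul, EReal.coe_le_coe_iff,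
    ← div_eq_mul_inv, le_div_iff₀ hpos]

lemma mem_holderSub_eIndicator_iff {s : ℝ} {Ω : Set X} {x₀ : X} (hx₀ : x₀ ∈ Ω)
    {p : X →L[ℝ] ℝ} :
    p ∈ holderSub s (eIndicator Ω) x₀ ↔
      ∃ m : ℝ, ∀ᶠ x in 𝓝[≠] x₀, x ∈ Ω → m * ‖x - x₀‖ ^ (1 + s) ≤ -p (x - x₀) := by
  refine mem_holderSub_iff.trans (exists_congr fun m => ?_)
  refine eventually_congr (eventually_mem_nhdsWithin.mono fun x (hx : x ≠ x₀) => ?_)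
  have hpos : 0 < ‖x - x₀‖ ^ (1 + s) := Real.rpow_pos_of_pos (norm_pos_iff.mpr (sub_ne_zero.mpr hx)) _
  by_cases hxΩ : x ∈ Ω
  · simp only [eIndicator, hxΩ, hx₀, ↓reduceIte, forall_const]
    rw [← EReal.coe_zero, ← EReal.coe_sub, ← EReal.coe_sub, ← EReal.coe_mul,
      EReal.coe_le_coe_iff, ← div_eq_mul_inv, le_div_iff₀ hpos, sub_zero, zero_sub]
  · simp only [eIndicator, hxΩ, hx₀, ↓reduceIte, false_implies, iff_true]
    rw [← EReal.coe_zero, EReal.top_sub_coe, EReal.top_sub_coe,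
      EReal.top_mul_of_pos (EReal.coe_pos.mpr (inv_pos.mpr hpos))]
    exact le_top

omit [NormedSpace ℝ X] in
lemma iInf_coe_norm_sub_eq_infDist {Ω : Set X} [Nonempty Ω] (x : X) :
    ⨅ ω : Ω, ((‖x - (ω : X)‖ : ℝ) : EReal) = ((infDist x Ω : ℝ) : EReal) := by
  rw [infDist_eq_iInf]
  simp only [dist_eq_norm]
  exact (Monotone.map_ciInf_of_continuousAt continuous_coe_real_ereal.continuousAt
    (fun _ _ => EReal.coe_le_coe_iff.mpr) ⟨0, by rintro _ ⟨ω, rfl⟩; exact norm_nonneg _⟩).symm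

lemma ContinuousLinearMap.norm_le_one_of_eventually_le {s C : ℝ} (hs : 0 < s)
    {p : X →L[ℝ] ℝ} (h : ∀ᶠ u in 𝓝[≠] (0 : X), p u ≤ ‖u‖ + C * ‖u‖ ^ (1 + s)) :
    ‖p‖ ≤ 1 := by
  have hle : ∀ u, p u ≤ ‖u‖ := by
    intro u
    rcases eq_or_ne u 0 with rfl | hu
    · simp
    have hsmul : Tendsto (fun t : ℝ => t • u) (𝓝[>] 0) (𝓝[≠] 0) := by
      refine tendsto_nhdsWithin_iff.mpr ⟨?_, ?_⟩
      · exact ((continuous_id.smul continuous_const).tendsto' 0 0 (zero_smul ℝ u)).mono_left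
          nhdsWithin_le_nhds
      · filter_upwards [self_mem_nhdsWithin] with t (ht : 0 < t)
        exact smul_ne_zero ht.ne' hu
    have hev : ∀ᶠ t in 𝓝[>] (0 : ℝ), p u ≤ ‖u‖ + C * t ^ s * ‖u‖ ^ (1 + s) := by
      filter_upwards [hsmul.eventually h, self_mem_nhdsWithin] with t ht (ht0 : 0 < t)
      rw [map_smul, smul_eq_mul, norm_smul, Real.norm_of_nonneg ht0.le,
        Real.mul_rpow ht0.le (norm_nonneg u), Real.rpow_add ht0, Real.rpow_one] at ht
      refine le_of_mul_le_mul_left ?_ ht0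
      linarith
    have hlim : Tendsto (fun t : ℝ => ‖u‖ + C * t ^ s * ‖u‖ ^ (1 + s)) (𝓝[>] 0) (𝓝 ‖u‖) := by
      have h0 := (Real.continuousAt_rpow_const 0 s (Or.inr hs.le)).tendsto.mono_left
        (nhdsWithin_le_nhds (s := Set.Ioi 0))
      rw [Real.zero_rpow hs.ne'] at h0
      simpa using tendsto_const_nhds.add ((h0.const_mul C).mul_const (‖u‖ ^ (1 + s)))
    exact ge_of_tendsto hlim hev
  refine p.opNorm_le_bound zero_le_one fun u => ?_
  rw [one_mul, Real.norm_eq_abs, abs_le]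
  exact ⟨neg_le.mpr (by simpa using hle (-u)), hle u⟩

section infDist

variable {Ω : Set X} {x₀ : X} {s : ℝ}

lemma holderSub_infDist_subset_eIndicator (hx₀ : x₀ ∈ Ω) :
    holderSub s (fun x => (infDist x Ω : EReal)) x₀ ⊆ holderSub s (eIndicator Ω) x₀ := by
  intro p hp
  obtain ⟨m, hm⟩ := mem_holderSub_coe_iff.mp hp
  refine (mem_holderSub_eIndicator_iff hx₀).mpr ⟨m, hm.mono fun x hx hxΩ => ?_⟩
  simpa [infDist_zero_of_mem hxΩ, infDist_zero_of_mem hx₀] using hx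

lemma holderSub_infDist_subset_closedBall (hx₀ : x₀ ∈ Ω) (hs : 0 < s) :
    holderSub s (fun x => (infDist x Ω : EReal)) x₀ ⊆ {p | ‖p‖ ≤ 1} := by
  intro p hp
  obtain ⟨m, hm⟩ := mem_holderSub_coe_iff.mp hp
  refine ContinuousLinearMap.norm_le_one_of_eventually_le (C := -m) hs ?_
  have hshift : Tendsto (· + x₀) (𝓝[≠] 0) (𝓝[≠] x₀) := by
    rw [Tendsto, map_add_right_nhdsNE, zero_add]
  filter_upwards [hshift.eventually hm] with u hu
  have hdist : infDist (u + x₀) Ω ≤ ‖u‖ := by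
    simpa [dist_eq_norm] using infDist_le_dist_of_mem (x := u + x₀) hx₀
  simp only [add_sub_cancel_right, infDist_zero_of_mem hx₀] at hu
  linarith

lemma le_infDist_sub_apply_of_normal (hx₀ : x₀ ∈ Ω) {p : X →L[ℝ] ℝ} (hp : ‖p‖ ≤ 1) (hs : 0 ≤ s)
    {m δ : ℝ} (hm : m ≤ 0)
    (hΩ : ∀ ω ∈ Ω, ‖ω - x₀‖ < δ → m * ‖ω - x₀‖ ^ (1 + s) ≤ -p (ω - x₀))
    {x : X} (hx : x ≠ x₀) (hx1 : ‖x - x₀‖ ≤ 1) (hxδ : 3 * ‖x - x₀‖ < δ) :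
    (m * 3 ^ (1 + s) - 1) * ‖x - x₀‖ ^ (1 + s) ≤ infDist x Ω - p (x - x₀) := by
  set r := ‖x - x₀‖
  have hr : 0 < r := norm_pos_iff.mpr (sub_ne_zero.mpr hx)
  have hrs : r ^ (1 + s) ≤ r := by
    simpa using Real.rpow_le_rpow_of_exponent_ge hr hx1 (by linarith : 1 ≤ 1 + s)
  obtain ⟨ω, hω, hωx⟩ := (infDist_lt_iff ⟨x₀, hx₀⟩).mp
    (lt_add_of_pos_right (infDist x Ω) (Real.rpow_pos_of_pos hr (1 + s)))
  rw [dist_eq_norm] at hωx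
  have hdist : infDist x Ω ≤ r := by
    simpa [dist_eq_norm] using infDist_le_dist_of_mem (x := x) hx₀
  have hωx₀ : ‖ω - x₀‖ ≤ 3 * r := by
    have := norm_sub_le_norm_sub_add_norm_sub ω x x₀
    rw [norm_sub_rev ω x] at this
    linarith
  have hnormal : m * (3 ^ (1 + s) * r ^ (1 + s)) ≤ -p (ω - x₀) := by
    rw [← Real.mul_rpow (by norm_num) hr.le]
    exact (mul_le_mul_of_nonpos_left (Real.rpow_le_rpow (norm_nonneg _) hωx₀ (by linarith))
      hm).trans (hΩ ω hω (hωx₀.trans_lt hxδ))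
  have hlip : p (x - ω) ≤ ‖x - ω‖ :=
    (le_abs_self _).trans ((p.le_opNorm _).trans (mul_le_of_le_one_left (norm_nonneg _) hp))
  have hsplit : p (x - x₀) = p (x - ω) + p (ω - x₀) := by
    rw [← map_add, sub_add_sub_cancel]
  linarith

lemma holderSub_eIndicator_inter_closedBall_subset (hx₀ : x₀ ∈ Ω) (hs : 0 ≤ s) :
    holderSub s (eIndicator Ω) x₀ ∩ {p | ‖p‖ ≤ 1} ⊆
      holderSub s (fun x => (infDist x Ω : EReal)) x₀ := by
  rintro p ⟨hpN, hp : ‖p‖ ≤ 1⟩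
  obtain ⟨m, hm⟩ := (mem_holderSub_eIndicator_iff hx₀).mp hpN
  obtain ⟨δ, hδ, hδm⟩ := Metric.eventually_nhds_iff.mp (eventually_nhdsWithin_iff.mp hm)
  have hΩ : ∀ ω ∈ Ω, ‖ω - x₀‖ < δ → min m 0 * ‖ω - x₀‖ ^ (1 + s) ≤ -p (ω - x₀) := by
    intro ω hω hωδ
    rcases eq_or_ne ω x₀ with rfl | hne
    · simp [Real.zero_rpow (by linarith : 1 + s ≠ 0)]
    · refine (mul_le_mul_of_nonneg_right (min_le_left m 0) (by positivity)).trans ?_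
      exact hδm (by rwa [dist_eq_norm]) hne hω
  refine mem_holderSub_coe_iff.mpr ⟨min m 0 * 3 ^ (1 + s) - 1, ?_⟩
  filter_upwards [nhdsWithin_le_nhds (ball_mem_nhds x₀ (by positivity : 0 < min (δ / 3) 1)),
    self_mem_nhdsWithin] with x hxball (hx : x ≠ x₀)
  rw [mem_ball, dist_eq_norm, lt_min_iff] at hxball
  rw [infDist_zero_of_mem hx₀, sub_zero]
  exact le_infDist_sub_apply_of_normal hx₀ hp hs (min_le_right m 0) hΩ hx hxball.2.le
    (by linarith [hxball.1])

end infDist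

theorem stmt18_general (Ω : Set X) (x₀ : X) (hx₀ : x₀ ∈ Ω) :
    ∀ s : ℝ, 0 < s →
      holderSub s (fun x => ⨅ ω : Ω, ((‖x - (ω : X)‖ : ℝ) : EReal)) x₀
        = holderSub s (eIndicator Ω) x₀ ∩ {p | ‖p‖ ≤ 1} := by
  intro s hs
  have : Nonempty Ω := ⟨⟨x₀, hx₀⟩⟩
  simp only [iInf_coe_norm_sub_eq_infDist]
  exact subset_antisymm
    (fun _ hp => ⟨holderSub_infDist_subset_eIndicator hx₀ hp,
      holderSub_infDist_subset_closedBall hx₀ hs hp⟩)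
    (holderSub_eIndicator_inter_closedBall_subset hx₀ hs.le)

theorem stmt18 (Ω : Set X) (hΩ : Ω.Nonempty) (x₀ : X) (hx₀ : x₀ ∈ Ω) :
    ∀ s : ℝ, 0 < s →
      holderSub s (fun x => ⨅ ω : Ω, ((‖x - (ω : X)‖ : ℝ) : EReal)) x₀
        = holderSub s (eIndicator Ω) x₀ ∩ {p | ‖p‖ ≤ 1} :=
  stmt18_general Ω x₀ hx₀
end
end
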